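/- arXiv:2408.06824 — 2 statements merged into one kernel-verified Lean document; each statement's English description precedes it below -/
import Mathlib

section
/- For all real s, t ≥ 0 and p ≥ 1, the inequality st ≤ (1+t)(log(1+t))^p + exp((p/e + 1)·s^{1/p}) holds. -/
/-!
Split according to whether `s ≤ (log (1 + t)) ^ p` or `t ≤ exp (s ^ (1 / p))`; one of the two always
holds. In the first case `s * t` is absorbed by the first term. In the second, `s * t ≤ s * exp (s ^ (1 / p))`,
and `s = (s ^ (1 / p)) ^ p ≤ exp (p / e * s ^ (1 / p))` because `u ≤ exp (u / e)` for all `u`.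
-/

open Real

lemma mul_le_mul_add_mul_of_le_or_le {s t a b : ℝ} (hs : 0 ≤ s) (ht : 0 ≤ t) (ha : 0 ≤ a)
    (hb : 0 ≤ b) (h : s ≤ a ∨ t ≤ b) : s * t ≤ t * a + s * b := by
  rcases h with h | h
  · nlinarith [mul_nonneg hs hb]
  · nlinarith [mul_nonneg ht ha]

lemma le_log_one_add_rpow_or_le_exp_rpow_one_div {p s t : ℝ} (hp : 0 < p) (hs : 0 ≤ s)
    (ht : -1 < t) : s ≤ log (1 + t) ^ p ∨ t ≤ exp (s ^ (1 / p)) := by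
  rcases le_total (s ^ (1 / p)) (log (1 + t)) with h | h
  · left
    calc s = (s ^ (1 / p)) ^ p := by rw [one_div, rpow_inv_rpow hs hp.ne']
      _ ≤ log (1 + t) ^ p := by gcongr
  · right
    calc t ≤ exp (log (1 + t)) := by rw [exp_log (by linarith)]; linarith
      _ ≤ exp (s ^ (1 / p)) := exp_le_exp.mpr h

lemma rpow_le_exp_div_exp_one_mul {u p : ℝ} (hu : 0 ≤ u) (hp : 0 ≤ p) :
    u ^ p ≤ exp (p / exp 1 * u) := by
  have key : u ≤ exp (u / exp 1) := by
    simpa [mul_div_cancel₀ u (exp_ne_zero 1)] using exp_one_mul_le_exp (x := u / exp 1)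
  calc u ^ p ≤ exp (u / exp 1) ^ p := by gcongr
    _ = exp (p / exp 1 * u) := by rw [← exp_mul]; ring_nf

lemma le_exp_div_exp_one_mul_rpow_one_div {p s : ℝ} (hp : 0 < p) (hs : 0 ≤ s) :
    s ≤ exp (p / exp 1 * s ^ (1 / p)) := by
  calc s = (s ^ (1 / p)) ^ p := by rw [one_div, rpow_inv_rpow hs hp.ne']
    _ ≤ exp (p / exp 1 * s ^ (1 / p)) := rpow_le_exp_div_exp_one_mul (by positivity) hp.le

theorem young_type_inequality (p s t : ℝ) (hp : 1 ≤ p) (hs : 0 ≤ s) (ht : 0 ≤ t) :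
    s * t ≤ (1 + t) * (Real.log (1 + t)) ^ p +
      Real.exp ((p / Real.exp 1 + 1) * s ^ (1 / p)) := by
  have hp0 : 0 < p := by linarith
  have hlog : 0 ≤ log (1 + t) := log_nonneg (by linarith)
  set u := s ^ (1 / p)
  calc s * t ≤ t * log (1 + t) ^ p + s * exp u :=
        mul_le_mul_add_mul_of_le_or_le hs ht (by positivity) (exp_pos u).le
          (le_log_one_add_rpow_or_le_exp_rpow_one_div hp0 hs (by linarith))
    _ ≤ (1 + t) * log (1 + t) ^ p + exp (p / exp 1 * u) * exp u := by
        gcongr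
        · linarith
        · exact le_exp_div_exp_one_mul_rpow_one_div hp0 hs
    _ = (1 + t) * log (1 + t) ^ p + exp ((p / exp 1 + 1) * u) := by
        rw [← exp_add]; ring_nf
end

section
/- Hölder-type inequality with the pair (Φ_p, exp): for p ≥ 1, a finite measure space (X, μ), measurable f, g : X → [0,∞), and any λ > 0 and r > 1 with conjugate exponent r' = r/(r−1): ∫_X f g dμ ≤ (∫_X Φ_p(f) dμ) / λ + (1/λ) ∫_X exp(c_p (λ g)^{1/p}) dμ, where c_p = p/e + 1 and Φ_p(t) = (1+t)(log(1+t))^p − p∫₀ᵗ(log(1+x))^{p−1}dx. (This follows from Young's inequality f·(λg) ≤ Φ_p(f) + Φ_p*(λg) and the bound Φ_p*(s) ≤ exp(c_p s^{1/p}).) -/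
/-!
`Phi p` is the primitive, vanishing at `0`, of `φ(x) = log(1 + x) ^ p`, and the inverse of `φ`
is `ψ(s) = exp(s ^ (1/p)) - 1`. Young's inequality `t s ≤ Φ(t) + s ψ(s)` together with
`u ^ p ≤ exp(p u / e)` gives `t s ≤ Φ(t) + exp((p/e + 1) s ^ (1/p))`; apply it to `f` and `λ g`
and integrate.
-/

open MeasureTheory

noncomputable def Phi (p t : ℝ) : ℝ :=
  (1 + t) * (Real.log (1 + t)) ^ p - p * ∫ x in (0:ℝ)..t, (Real.log (1 + x)) ^ (p - 1)

open Real

lemma intervalIntegrable_log_one_add_rpow {q a b : ℝ} (hq : 0 ≤ q) (ha : 0 ≤ a) (hb : 0 ≤ b) :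
    IntervalIntegrable (fun x => log (1 + x) ^ q) volume a b := by
  refine ContinuousOn.intervalIntegrable fun x hx => ?_
  have hx0 : 0 ≤ x := by
    rcases Set.mem_uIcc.mp hx with h | h
    exacts [ha.trans h.1, hb.trans h.1]
  have hlog : ContinuousAt (fun y => log (1 + y)) x :=
    ContinuousAt.log (f := fun y => 1 + y) (by fun_prop) (by linarith)
  exact (hlog.rpow_const (Or.inr hq)).continuousWithinAt

lemma hasDerivAt_one_add_mul_log_one_add_rpow {p x : ℝ} (hp : 1 ≤ p) (hx : -1 < x) :
    HasDerivAt (fun y => (1 + y) * log (1 + y) ^ p)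
      (log (1 + x) ^ p + p * log (1 + x) ^ (p - 1)) x := by
  have hx' : 1 + x ≠ 0 := by linarith
  have hlin : HasDerivAt (fun y : ℝ => 1 + y) 1 x := (hasDerivAt_id x).const_add 1
  have hpow := (hasDerivAt_rpow_const (Or.inr hp)).comp x (hlin.log hx')
  refine (hlin.mul hpow).congr_deriv ?_
  simp only [Function.comp_apply]
  field_simp

lemma Phi_eq_integral {p t : ℝ} (hp : 1 ≤ p) (ht : 0 ≤ t) :
    Phi p t = ∫ x in (0:ℝ)..t, log (1 + x) ^ p := by
  have hint := intervalIntegrable_log_one_add_rpow (q := p) (by linarith) le_rfl ht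
  have hint' :=
    (intervalIntegrable_log_one_add_rpow (q := p - 1) (by linarith) le_rfl ht).const_mul p
  have hftc := intervalIntegral.integral_eq_sub_of_hasDerivAt
    (fun x hx => hasDerivAt_one_add_mul_log_one_add_rpow hp (by
      rw [Set.uIcc_of_le ht] at hx
      linarith [hx.1]))
    (hint.add hint')
  rw [intervalIntegral.integral_add hint hint', intervalIntegral.integral_const_mul] at hftc
  simp only [add_zero, log_one, zero_rpow (by linarith : p ≠ 0), mul_zero, sub_zero] at hftc
  rw [Phi]
  linarith

lemma Phi_nonneg {p t : ℝ} (hp : 1 ≤ p) (ht : 0 ≤ t) : 0 ≤ Phi p t := by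
  rw [Phi_eq_integral hp ht]
  exact intervalIntegral.integral_nonneg ht fun x hx =>
    rpow_nonneg (log_nonneg (by linarith [hx.1])) p

lemma mul_rpow_le_Phi_add_rpow_mul {p t u : ℝ} (hp : 1 ≤ p) (ht : 0 ≤ t) (hu : 0 ≤ u) :
    t * u ^ p ≤ Phi p t + u ^ p * (exp u - 1) := by
  set T := exp u - 1
  have hT : 0 ≤ T := by linarith [one_le_exp hu]
  have hs : 0 ≤ u ^ p := rpow_nonneg hu p
  rcases le_total t T with htT | hTt
  · nlinarith [Phi_nonneg hp ht]
  have hsplit : Phi p t = (∫ x in (0:ℝ)..T, log (1 + x) ^ p) + ∫ x in T..t, log (1 + x) ^ p := by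
    rw [Phi_eq_integral hp ht, intervalIntegral.integral_add_adjacent_intervals
      (intervalIntegrable_log_one_add_rpow (q := p) (by linarith) le_rfl hT)
      (intervalIntegrable_log_one_add_rpow (q := p) (by linarith) hT ht)]
  have hhead : 0 ≤ ∫ x in (0:ℝ)..T, log (1 + x) ^ p := by
    simpa only [Phi_eq_integral hp hT] using Phi_nonneg hp hT
  have htail : (t - T) * u ^ p ≤ ∫ x in T..t, log (1 + x) ^ p := by
    have := intervalIntegral.integral_mono_on hTt intervalIntegrable_const
      (intervalIntegrable_log_one_add_rpow (q := p) (by linarith) hT ht) fun x hx => by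
        have hux : u ≤ log (1 + x) := by
          rw [le_log_iff_exp_le (by linarith [hx.1])]
          linarith [hx.1]
        exact rpow_le_rpow hu hux (by linarith : 0 ≤ p)
    simpa only [intervalIntegral.integral_const, smul_eq_mul] using this
  linarith

lemma rpow_le_exp_mul_div_exp_one {p u : ℝ} (hp : 0 ≤ p) (hu : 0 ≤ u) :
    u ^ p ≤ exp (p / exp 1 * u) := by
  have hue : u ≤ exp (u / exp 1) := by
    simpa only [mul_div_cancel₀ u (exp_pos 1).ne'] using exp_one_mul_le_exp (x := u / exp 1)
  calc u ^ p ≤ exp (u / exp 1) ^ p := rpow_le_rpow hu hue hp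
    _ = exp (p / exp 1 * u) := by rw [← exp_mul]; ring_nf

lemma mul_le_Phi_add_exp {p t s : ℝ} (hp : 1 ≤ p) (ht : 0 ≤ t) (hs : 0 ≤ s) :
    t * s ≤ Phi p t + exp ((p / exp 1 + 1) * s ^ (1 / p)) := by
  set u := s ^ (1 / p)
  have hu : 0 ≤ u := rpow_nonneg hs _
  have hus : u ^ p = s := by
    simp only [u, one_div]
    exact rpow_inv_rpow hs (by linarith)
  have hexp_bound : u ^ p * (exp u - 1) ≤ exp ((p / exp 1 + 1) * u) :=
    calc u ^ p * (exp u - 1) ≤ exp (p / exp 1 * u) * exp u := by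
          gcongr
          · linarith [one_le_exp hu]
          · exact rpow_le_exp_mul_div_exp_one (by linarith) hu
          · linarith
      _ = exp ((p / exp 1 + 1) * u) := by rw [← exp_add]; ring_nf
  have := mul_rpow_le_Phi_add_rpow_mul hp ht hu
  rw [hus] at this hexp_bound
  linarith

theorem holder_type_inequality_general {X : Type*} [MeasurableSpace X]
    (μ : Measure X) (p lam : ℝ)
    (hp : 1 ≤ p) (hlam : 0 < lam)
    (f g : X → ℝ) (hf0 : ∀ x, 0 ≤ f x) (hg0 : ∀ x, 0 ≤ g x)
    (hΦ : Integrable (fun x => Phi p (f x)) μ)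
    (hE : Integrable
      (fun x => Real.exp ((p / Real.exp 1 + 1) * (lam * g x) ^ (1 / p))) μ) :
    ∫ x, f x * g x ∂μ ≤ (∫ x, Phi p (f x) ∂μ) / lam +
      (1 / lam) * ∫ x, Real.exp ((p / Real.exp 1 + 1) * (lam * g x) ^ (1 / p)) ∂μ := by
  set E := fun x => exp ((p / exp 1 + 1) * (lam * g x) ^ (1 / p))
  have hpointwise : ∀ x, f x * g x ≤ (Phi p (f x) + E x) / lam := fun x => by
    rw [le_div_iff₀ hlam, mul_assoc, mul_comm (g x)]
    exact mul_le_Phi_add_exp hp (hf0 x) (mul_nonneg hlam.le (hg0 x))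
  calc ∫ x, f x * g x ∂μ ≤ ∫ x, (Phi p (f x) + E x) / lam ∂μ :=
        integral_mono_of_nonneg (.of_forall fun x => mul_nonneg (hf0 x) (hg0 x))
          ((hΦ.add hE).div_const lam) (.of_forall hpointwise)
    _ = (∫ x, Phi p (f x) ∂μ) / lam + (1 / lam) * ∫ x, E x ∂μ := by
        rw [integral_div, integral_add hΦ hE]
        ring

theorem holder_type_inequality {X : Type*} [MeasurableSpace X]
    (μ : Measure X) [IsFiniteMeasure μ] (p lam r : ℝ)
    (hp : 1 ≤ p) (hlam : 0 < lam) (hr : 1 < r)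
    (f g : X → ℝ) (hf0 : ∀ x, 0 ≤ f x) (hg0 : ∀ x, 0 ≤ g x)
    (hfm : Measurable f) (hgm : Measurable g)
    (hΦ : Integrable (fun x => Phi p (f x)) μ)
    (hE : Integrable
      (fun x => Real.exp ((p / Real.exp 1 + 1) * (lam * g x) ^ (1 / p))) μ) :
    ∫ x, f x * g x ∂μ ≤ (∫ x, Phi p (f x) ∂μ) / lam +
      (1 / lam) * ∫ x, Real.exp ((p / Real.exp 1 + 1) * (lam * g x) ^ (1 / p)) ∂μ :=
  holder_type_inequality_general μ p lam hp hlam f g hf0 hg0 hΦ hE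
end
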